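/- Let ξ = (G, L, A) be a system on a strongly connected multigraph with ρ(ξ) = 1 that admits an invariant (Barabanov) multinorm. Then for every starting vertex i and every x₀ ∈ L_i with ‖x₀‖_i = 1 there exists an infinite path α = (e_1, e_2, …) starting at i such that the trajectory x_k = A_{e_k} x_{k−1} satisfies ‖x_k‖ = 1 for all k ≥ 0. -/

import Mathlib

open Filter

section GraphSystem

variable {V : Type*} [Fintype V] [DecidableEq V] {E : Type*}
variable (src tgt : E → V) (L : V → Type*)
  [∀ v, NormedAddCommGroup (L v)] [∀ v, NormedSpace ℝ (L v)]
  [∀ v, FiniteDimensional ℝ (L v)]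

/-- The operator on the direct sum `∀ v, L v` induced by the edge map `A e : L (src e) →L L (tgt e)`:
it reads the component at `src e`, applies `A e`, and writes the result to the component `tgt e`. -/
noncomputable def bigOp (A : ∀ e, L (src e) →L[ℝ] L (tgt e)) (e : E) :
    (∀ v, L v) →L[ℝ] (∀ v, L v) :=
  LinearMap.toContinuousLinearMap
    { toFun := fun x v => if h : v = tgt e then cast (congrArg L h).symm (A e (x (src e))) else 0
      map_add' := by
        intro x y
        funext v
        by_cases h : v = tgt e
        · subst h; simp
        · simp [h]
      map_smul' := by
        intro c x
        funext v
        by_cases h : v = tgt e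
        · subst h; simp
        · simp [h] }

/-- Composition of operators along a list of edges (the head of the list acts first). -/
noncomputable def pathProd (A : ∀ e, L (src e) →L[ℝ] L (tgt e)) :
    List E → ((∀ v, L v) →L[ℝ] (∀ v, L v))
  | [] => 1
  | e :: l => pathProd A l * bigOp src tgt L A e

/-- A list of edges is composable (is a path) if consecutive edges match. -/
def Composable : List E → Prop := List.Chain' fun e f => tgt e = src f

/-- `IsPathFT l i j`: the list of edges `l` is a path from vertex `i` to vertex `j`. -/
def IsPathFT (l : List E) (i j : V) : Prop :=
  Composable src tgt l ∧ (∀ e ∈ l.head?, src e = i) ∧ (∀ e ∈ l.getLast?, tgt e = j) ∧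
    (l = [] → i = j)

/-- Inclusion of a component space into the direct sum. -/
def incl (i : V) (x : L i) : ∀ v, L v :=
  fun v => if h : v = i then cast (congrArg L h).symm x else 0

/-- A collection of subspaces is invariant if every edge map sends the subspace at its source
into the subspace at its target. -/
def InvariantSub (A : ∀ e, L (src e) →L[ℝ] L (tgt e)) (M : ∀ v, Submodule ℝ (L v)) : Prop :=
  ∀ e, ∀ x ∈ M (src e), A e x ∈ M (tgt e)

/-- The system is irreducible if the only invariant collections of subspaces are the trivial ones. -/
def IrredSys (A : ∀ e, L (src e) →L[ℝ] L (tgt e)) : Prop :=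
  ∀ M : ∀ v, Submodule ℝ (L v), InvariantSub src tgt L A M →
    (∀ v, M v = ⊥) ∨ (∀ v, M v = ⊤)

/-- `k ↦ max_{|α| = k} ‖Π_α‖^(1/k)`, whose limit is the constrained joint spectral radius. -/
noncomputable def jsrSeq (A : ∀ e, L (src e) →L[ℝ] L (tgt e)) (k : ℕ) : ℝ :=
  sSup {x : ℝ | ∃ l : List E, Composable src tgt l ∧ l.length = k ∧
    x = ‖pathProd src tgt L A l‖ ^ ((1 : ℝ) / k)}

/-! The maximum in the invariance identity of a Barabanov multinorm is attained, so from every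
state `⟨v, x⟩` some edge out of `v` carries `x` to a vector of the same multinorm. Following these
edges from `⟨i, x₀⟩` gives the trajectory; on the direct sum `∀ v, L v` the path product applied to
`incl L i x₀` is the inclusion of the current state, so its multinorm stays `1`. -/

lemma bigOp_incl (A : ∀ e, L (src e) →L[ℝ] L (tgt e)) (e : E) {v : V} (h : src e = v)
    (x : L v) :
    bigOp src tgt L A e (incl L v x) = incl L (tgt e) (A e (cast (congrArg L h).symm x)) := by
  subst h
  funext w
  by_cases hw : w = tgt e
  · subst hw
    simp [bigOp, incl]
  · simp [bigOp, incl, hw]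

lemma pathProd_ofFn_iterate_incl (A : ∀ e, L (src e) →L[ℝ] L (tgt e))
    (step : (Σ v, L v) → Σ v, L v) (next : (Σ v, L v) → E)
    (hstep : ∀ p, bigOp src tgt L A (next p) (incl L p.1 p.2) = incl L (step p).1 (step p).2)
    (k : ℕ) (p : Σ v, L v) :
    pathProd src tgt L A (List.ofFn fun j : Fin k => next (step^[j] p)) (incl L p.1 p.2) =
      incl L (step^[k] p).1 (step^[k] p).2 := by
  induction k generalizing p with
  | zero => rfl
  | succ k ih =>
    rw [List.ofFn_succ]
    change pathProd src tgt L A _ (bigOp src tgt L A (next p) (incl L p.1 p.2)) = _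
    rw [hstep]
    exact ih (step p)

theorem exists_unit_norm_trajectory (A : ∀ e, L (src e) →L[ℝ] L (tgt e))
    (N : ∀ v, Seminorm ℝ (L v))
    (hbar : ∀ (i : V) (x : L i),
      IsGreatest {y : ℝ | ∃ (e : E) (h : src e = i),
          y = N (tgt e) (A e (cast (congrArg L h).symm x))} (N i x)) :
    ∀ (i : V) (x₀ : L i), N i x₀ = 1 →
      ∃ e : ℕ → E, src (e 0) = i ∧ (∀ k : ℕ, src (e (k + 1)) = tgt (e k)) ∧
        ∀ k : ℕ, N (tgt (e k))
          (pathProd src tgt L A (List.ofFn fun j : Fin (k + 1) => e j) (incl L i x₀)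
            (tgt (e k))) = 1 := by
  intro i x₀ hx₀
  choose next hnext hnorm using fun (p : Σ v, L v) => (hbar p.1 p.2).1
  let step (p : Σ v, L v) : Σ v, L v :=
    ⟨tgt (next p), A (next p) (cast (congrArg L (hnext p)).symm p.2)⟩
  let q (k : ℕ) : Σ v, L v := step^[k] ⟨i, x₀⟩
  have hq_succ (k : ℕ) : q (k + 1) = step (q k) := Function.iterate_succ_apply' _ _ _
  have hq_unit (k : ℕ) : N (q k).1 (q k).2 = 1 := by
    induction k with
    | zero => exact hx₀
    | succ k ih => rw [hq_succ, ← ih]; exact (hnorm (q k)).symm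
  have hpath := pathProd_ofFn_iterate_incl src tgt L A step next
    (fun p => bigOp_incl src tgt L A (next p) (hnext p) p.2)
  refine ⟨fun k => next (q k), hnext _, fun k => by simp only [hq_succ]; exact hnext _,
    fun k => ?_⟩
  rw [hpath (k + 1) ⟨i, x₀⟩]
  change N _ (incl L (q (k + 1)).1 (q (k + 1)).2 _) = 1
  rw [← hq_unit (k + 1), hq_succ]
  simp [incl, step]

end GraphSystem
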